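/- Let G be a graph with no isolated vertices, v, w distinct vertices, and suppose: (i) no set of at most 3 vertices contained in N₂(v,w) ∪ N₃(v,w) dominates N₃(v,w), and (ii) no set of the form {w}, {w,u}, or {w,u,u'} with u, u' ∈ N₂(v,w) ∪ N₃(v,w) dominates N₃(v,w). Then every minimum total dominating set of G can be modified, without increasing its size, into a total dominating set containing v. -/

import Mathlib

/-!
Suppose `v ∉ D` and put `S = N₂(v,w) ∪ N₃(v,w)`. A vertex of `S` has all its neighbours in
`N(v,w) ∪ {v,w}`, so `D ∩ S` may be traded for `v`, `w` and one neighbour of each: every vertex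
of `N(v,w)` is then dominated by `v` or `w`, and `v`, `w` by their chosen neighbours. This costs
at most four new vertices, or three if `w ∈ D` already. On the other hand the `D`-neighbours of
a vertex of `N₃(v,w)` lie in `S ∪ {w}`, so `D ∩ S` (together with `w` if `w ∈ D`) dominates
`N₃(v,w)`, and hypotheses (i) and (ii) say that `D ∩ S` then has at least four (resp. three)
vertices.
-/

/-- The joint open neighborhood N(v,w) = (N(v) ∪ N(w)) \ {v,w}. -/
def Npair {V : Type*} (G : SimpleGraph V) (v w : V) : Set V :=
  (G.neighborSet v ∪ G.neighborSet w) \ {v, w}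

def NP1 {V : Type*} (G : SimpleGraph V) (v w : V) : Set V :=
  {u | u ∈ Npair G v w ∧ ∃ x, G.Adj u x ∧ x ∉ Npair G v w ∪ {v, w}}

def NP2 {V : Type*} (G : SimpleGraph V) (v w : V) : Set V :=
  {u | u ∈ Npair G v w ∧ u ∉ NP1 G v w ∧ ∃ x ∈ NP1 G v w, G.Adj u x}

def NP3 {V : Type*} (G : SimpleGraph V) (v w : V) : Set V :=
  Npair G v w \ (NP1 G v w ∪ NP2 G v w)

theorem ncard_sdiff_union_le {α : Type*} {D S P : Set α} (hD : D.Finite)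
    (h : (P \ (D \ S)).ncard ≤ (D ∩ S).ncard) : (D \ S ∪ P).ncard ≤ D.ncard :=
  calc (D \ S ∪ P).ncard = (D \ S ∪ P \ (D \ S)).ncard := by rw [Set.union_sdiff_self]
    _ ≤ (D \ S).ncard + (P \ (D \ S)).ncard := Set.ncard_union_le _ _
    _ ≤ (D ∩ S).ncard + (D \ S).ncard := by omega
    _ = D.ncard := Set.ncard_inter_add_ncard_sdiff_eq_ncard D S hD

namespace SimpleGraph

variable {V : Type*} {G : SimpleGraph V}

def Dominates (G : SimpleGraph V) (S T : Set V) : Prop :=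
  ∀ u ∈ T, ∃ x ∈ S, G.Adj u x

def IsTotalDominatingSet (G : SimpleGraph V) (D : Set V) : Prop :=
  ∀ u, ∃ d ∈ D, G.Adj u d

theorem Dominates.mono {S S' T : Set V} (h : G.Dominates S T) (hS : S ⊆ S') :
    G.Dominates S' T := fun u hu =>
  let ⟨x, hx, hux⟩ := h u hu
  ⟨x, hS hx, hux⟩

variable {v w : V}

theorem mem_Npair_union_of_adj {x y : V} (hx : x ∈ Npair G v w) (hx1 : x ∉ NP1 G v w)
    (hxy : G.Adj x y) : y ∈ Npair G v w ∪ {v, w} := by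
  by_contra hy
  exact hx1 ⟨hx, y, hxy, hy⟩

theorem mem_Npair_of_mem_NP2_union_NP3 {x : V} (hx : x ∈ NP2 G v w ∪ NP3 G v w) :
    x ∈ Npair G v w :=
  hx.elim (·.1) (·.1)

theorem notMem_NP1_of_mem_NP2_union_NP3 {x : V} (hx : x ∈ NP2 G v w ∪ NP3 G v w) :
    x ∉ NP1 G v w :=
  hx.elim (·.2.1) fun hx3 h => hx3.2 (Or.inl h)

theorem adj_of_mem_NP3 {u d : V} (hu : u ∈ NP3 G v w) (hud : G.Adj u d) :
    d ∈ NP2 G v w ∪ NP3 G v w ∨ d = v ∨ d = w := by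
  have hu1 : u ∉ NP1 G v w := fun h => hu.2 (Or.inl h)
  rcases mem_Npair_union_of_adj hu.1 hu1 hud with hd | hd
  · have hd1 : d ∉ NP1 G v w := fun h => hu.2 (Or.inr ⟨hu.1, hu1, d, h, hud⟩)
    by_cases hd2 : d ∈ NP2 G v w
    · exact Or.inl (Or.inl hd2)
    · exact Or.inl (Or.inr ⟨hd, fun h => h.elim hd1 hd2⟩)
  · exact Or.inr hd

theorem IsTotalDominatingSet.dominates_NP3 {D : Set V} (hD : G.IsTotalDominatingSet D)
    (hv : v ∉ D) : G.Dominates (D ∩ (NP2 G v w ∪ NP3 G v w ∪ {w})) (NP3 G v w) := by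
  intro u hu
  obtain ⟨d, hd, hud⟩ := hD u
  refine ⟨d, ⟨hd, ?_⟩, hud⟩
  rcases adj_of_mem_NP3 hu hud with hS | rfl | rfl
  · exact Or.inl hS
  · exact absurd hd hv
  · exact Or.inr rfl

theorem IsTotalDominatingSet.sdiff_union {D : Set V} (hD : G.IsTotalDominatingSet D)
    {zv zw : V} (hzv : G.Adj v zv) (hzw : G.Adj w zw) :
    G.IsTotalDominatingSet (D \ (NP2 G v w ∪ NP3 G v w) ∪ {v, w, zv, zw}) := by
  intro u
  obtain ⟨d, hd, hud⟩ := hD u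
  by_cases hdS : d ∈ NP2 G v w ∪ NP3 G v w
  · rcases mem_Npair_union_of_adj (mem_Npair_of_mem_NP2_union_NP3 hdS)
      (notMem_NP1_of_mem_NP2_union_NP3 hdS) hud.symm with ⟨hu | hu, -⟩ | rfl | rfl
    · exact ⟨v, by simp, hu.symm⟩
    · exact ⟨w, by simp, hu.symm⟩
    · exact ⟨zv, by simp, hzv⟩
    · exact ⟨zw, by simp, hzw⟩
  · exact ⟨d, Or.inl ⟨hd, hdS⟩, hud⟩

theorem ncard_sdiff_le_ncard_inter_NP2_union_NP3 {D : Set V} (hD : G.IsTotalDominatingSet D)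
    (hv : v ∉ D)
    (hno : ¬ ∃ T, T ⊆ NP2 G v w ∪ NP3 G v w ∧ T.ncard ≤ 3 ∧ G.Dominates T (NP3 G v w))
    (hDw : ¬ ∃ T, w ∈ T ∧ T \ {w} ⊆ NP2 G v w ∪ NP3 G v w ∧ T.ncard ≤ 3 ∧
      G.Dominates T (NP3 G v w))
    (zv zw : V) :
    ({v, w, zv, zw} \ (D \ (NP2 G v w ∪ NP3 G v w))).ncard ≤
      (D ∩ (NP2 G v w ∪ NP3 G v w)).ncard := by
  set S := NP2 G v w ∪ NP3 G v w
  have hdom : G.Dominates (D ∩ (S ∪ {w})) (NP3 G v w) := hD.dominates_NP3 hv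
  by_cases hw : w ∈ D
  · have h3 : 3 ≤ (D ∩ S).ncard := by
      by_contra! h
      refine hDw ⟨insert w (D ∩ S), Set.mem_insert _ _,
        Set.sdiff_singleton_subset_iff.2 (Set.insert_subset_insert Set.inter_subset_right),
        (Set.ncard_insert_le _ _).trans (by omega), hdom.mono ?_⟩
      rintro x ⟨hxD, hxS | rfl⟩
      exacts [Or.inr ⟨hxD, hxS⟩, Or.inl rfl]
    have hwS : w ∈ D \ S := ⟨hw, fun h => (mem_Npair_of_mem_NP2_union_NP3 h).2 (Or.inr rfl)⟩
    calc _ ≤ ({v, zv, zw} : Set V).ncard := Set.ncard_le_ncard (by grind)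
      _ ≤ 3 := by grw [Set.ncard_insert_le, Set.ncard_insert_le, Set.ncard_singleton]
      _ ≤ _ := h3
  · have h4 : 4 ≤ (D ∩ S).ncard := by
      by_contra! h
      refine hno ⟨D ∩ S, Set.inter_subset_right, by omega, hdom.mono ?_⟩
      rintro x ⟨hxD, hxS | rfl⟩
      exacts [⟨hxD, hxS⟩, absurd hxD hw]
    calc _ ≤ ({v, w, zv, zw} : Set V).ncard := Set.ncard_le_ncard Set.sdiff_subset
      _ ≤ 4 := by
        grw [Set.ncard_insert_le, Set.ncard_insert_le, Set.ncard_insert_le, Set.ncard_singleton]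
      _ ≤ _ := h4

end SimpleGraph

open SimpleGraph

theorem fact2_tds_contains_v_general {V : Type*} (G : SimpleGraph V) (v w : V)
    (hiso : ∀ x : V, ∃ y : V, G.Adj x y)
    (hno : ¬ ∃ T : Set V, T ⊆ NP2 G v w ∪ NP3 G v w ∧ T.ncard ≤ 3 ∧
      ∀ u ∈ NP3 G v w, ∃ x ∈ T, G.Adj u x)
    (hDw : ¬ ∃ T : Set V, w ∈ T ∧ T \ {w} ⊆ NP2 G v w ∪ NP3 G v w ∧ T.ncard ≤ 3 ∧
      ∀ u ∈ NP3 G v w, ∃ x ∈ T, G.Adj u x)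
    (D : Set V) (hDfin : D.Finite) (hD : ∀ u : V, ∃ d ∈ D, G.Adj u d) :
    ∃ D' : Set V, D'.Finite ∧ (∀ u : V, ∃ d ∈ D', G.Adj u d) ∧
      D'.ncard ≤ D.ncard ∧ v ∈ D' := by
  by_cases hv : v ∈ D
  · exact ⟨D, hDfin, hD, le_rfl, hv⟩
  obtain ⟨zv, hzv⟩ := hiso v
  obtain ⟨zw, hzw⟩ := hiso w
  refine ⟨D \ (NP2 G v w ∪ NP3 G v w) ∪ {v, w, zv, zw}, hDfin.sdiff.union (Set.toFinite _),
    IsTotalDominatingSet.sdiff_union hD hzv hzw, ncard_sdiff_union_le hDfin ?_, by simp⟩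
  exact ncard_sdiff_le_ncard_inter_NP2_union_NP3 hD hv hno hDw zv zw

/-- Fact 2: if no subset of N₂(v,w) ∪ N₃(v,w) of size at most 3 dominates
N₃(v,w), and no set of size at most 3 containing w and otherwise contained in
N₂(v,w) ∪ N₃(v,w) dominates N₃(v,w) (i.e. 𝒟_w = ∅), then every minimum total dominating
set can be modified, without increasing its size, into a total dominating set containing v. -/
theorem fact2_tds_contains_v {V : Type*} (G : SimpleGraph V) (v w : V) (hvw : v ≠ w)
    (hiso : ∀ x : V, ∃ y : V, G.Adj x y)
    (hN3 : (NP3 G v w).Nonempty)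
    (hno : ¬ ∃ T : Set V, T ⊆ NP2 G v w ∪ NP3 G v w ∧ T.ncard ≤ 3 ∧
      ∀ u ∈ NP3 G v w, ∃ x ∈ T, G.Adj u x)
    (hDw : ¬ ∃ T : Set V, w ∈ T ∧ T \ {w} ⊆ NP2 G v w ∪ NP3 G v w ∧ T.ncard ≤ 3 ∧
      ∀ u ∈ NP3 G v w, ∃ x ∈ T, G.Adj u x)
    (D : Set V) (hDfin : D.Finite) (hD : ∀ u : V, ∃ d ∈ D, G.Adj u d)
    (hmin : ∀ E : Set V, E.Finite → (∀ u : V, ∃ d ∈ E, G.Adj u d) → D.ncard ≤ E.ncard) :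
    ∃ D' : Set V, D'.Finite ∧ (∀ u : V, ∃ d ∈ D', G.Adj u d) ∧
      D'.ncard ≤ D.ncard ∧ v ∈ D' :=
  fact2_tds_contains_v_general G v w hiso hno hDw D hDfin hD
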